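/- Let G be an unmixed graph without isolated vertices such that the graph G_J of minimal vertex covers is connected. Then G has no duplicated vertices, i.e., there are no two distinct vertices t, t' with N_G(t) = N_G(t'). -/

import Mathlib

/-- `C` is a vertex cover of `G`: every edge of `G` meets `C`. -/
def IsVC {V : Type*} (G : SimpleGraph V) (C : Finset V) : Prop :=
  ∀ ⦃u v : V⦄, G.Adj u v → u ∈ C ∨ v ∈ C

/-- `C` is a minimal vertex cover of `G`. -/
def IsMinVC {V : Type*} (G : SimpleGraph V) (C : Finset V) : Prop :=
  IsVC G C ∧ ∀ D ⊆ C, IsVC G D → D = C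

/-- Every vertex cover contains a minimal vertex cover. -/
lemma exists_minVC_subset {V : Type*} (G : SimpleGraph V) :
    ∀ C0 : Finset V, IsVC G C0 → ∃ C, C ⊆ C0 ∧ IsMinVC G C := by
  intro C0
  induction C0 using Finset.strongInductionOn with
  | _ C0 ih =>
    intro h
    by_cases hm : ∀ D ⊆ C0, IsVC G D → D = C0
    · exact ⟨C0, subset_rfl, h, hm⟩
    · push_neg at hm
      obtain ⟨D, hD, hDc, hne⟩ := hm
      obtain ⟨C, hC1, hC2⟩ := ih D (HasSubset.Subset.ssubset_of_ne hD hne) hDc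
      exact ⟨C, hC1.trans hD, hC2⟩

lemma erase_isVC {V : Type*} [Fintype V] [DecidableEq V] (G : SimpleGraph V) (u : V) :
    IsVC G (Finset.univ.erase u) := by
  intro a b hab
  by_cases ha : a = u
  · right
    exact Finset.mem_erase.2 ⟨by rintro rfl; exact G.loopless.irrefl _ (ha ▸ hab), Finset.mem_univ _⟩
  · exact Or.inl (Finset.mem_erase.2 ⟨ha, Finset.mem_univ _⟩)

/-- Duplicated vertices: a minimal cover contains both or neither. -/
lemma dup_mem_iff {V : Type*} [DecidableEq V] (G : SimpleGraph V) {t t' : V}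
    (hN : G.neighborSet t = G.neighborSet t') {C : Finset V} (hC : IsMinVC G C)
    (ht : t ∈ C) : t' ∈ C := by
  by_contra ht'
  -- all neighbors of t' are in C
  have hsub : ∀ v, G.Adj t' v → v ∈ C := by
    intro v hv
    rcases hC.1 hv with h | h
    · exact absurd h ht'
    · exact h
  -- hence all neighbors of t are in C
  have hsub' : ∀ v, G.Adj t v → v ∈ C := by
    intro v hv
    have : v ∈ G.neighborSet t' := hN ▸ hv
    exact hsub v this
  -- then C.erase t is a cover, contradicting minimality
  have hcov : IsVC G (C.erase t) := by
    intro a b hab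
    by_cases ha : a = t
    · subst ha
      exact Or.inr (Finset.mem_erase.2 ⟨fun h => G.loopless.irrefl _ (h ▸ hab), hsub' b hab⟩)
    · by_cases hb : b = t
      · subst hb
        exact Or.inl (Finset.mem_erase.2 ⟨ha, hsub' a hab.symm⟩)
      · rcases hC.1 hab with h | h
        · exact Or.inl (Finset.mem_erase.2 ⟨ha, h⟩)
        · exact Or.inr (Finset.mem_erase.2 ⟨hb, h⟩)
  have heq := hC.2 (C.erase t) (Finset.erase_subset _ _) hcov
  rw [← heq] at ht
  exact (Finset.mem_erase.1 ht).1 rfl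

lemma exists_flip {V : Type*} [DecidableEq V] {t : V} {W : ℕ → Finset V} :
    ∀ n : ℕ, t ∈ W 0 → t ∉ W n → ∃ i < n, t ∈ W i ∧ t ∉ W (i + 1) := by
  intro n
  induction n with
  | zero => intro h h'; exact absurd h h'
  | succ n ih =>
    intro h0 hn
    by_cases hW : t ∈ W n
    · exact ⟨n, Nat.lt_succ_self n, hW, hn⟩
    · obtain ⟨i, hi, h1, h2⟩ := ih h0 hW
      exact ⟨i, hi.trans (Nat.lt_succ_self n), h1, h2⟩

theorem connected_cover_graph_no_duplicated_vertices
    {V : Type*} [Fintype V] [DecidableEq V] (G : SimpleGraph V)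
    (d : ℕ)
    (hiso : ∀ v : V, ∃ u : V, G.Adj v u)
    (hd : ∀ C : Finset V, IsMinVC G C → C.card = d)
    (hconn : ∀ C D : Finset V, IsMinVC G C → IsMinVC G D →
      ∃ (n : ℕ) (W : ℕ → Finset V), W 0 = C ∧ W n = D ∧
        (∀ i ≤ n, IsMinVC G (W i)) ∧ ∀ i < n, (W i ∩ W (i + 1)).card = d - 1) :
    ∀ t t' : V, t ≠ t' → G.neighborSet t ≠ G.neighborSet t' := by
  intro t t' hne hN
  obtain ⟨u, hu⟩ := hiso t
  -- a minimal cover C containing t (and hence t')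
  obtain ⟨C, hCsub, hC⟩ := exists_minVC_subset G (Finset.univ.erase u) (erase_isVC G u)
  have huC : u ∉ C := fun h => (Finset.mem_erase.1 (hCsub h)).1 rfl
  have htC : t ∈ C := by
    rcases hC.1 hu with h | h
    · exact h
    · exact absurd h huC
  have ht'C : t' ∈ C := dup_mem_iff G hN hC htC
  -- a minimal cover D containing neither t nor t'
  obtain ⟨D, hDsub, hD⟩ := exists_minVC_subset G (Finset.univ.erase t) (erase_isVC G t)
  have htD : t ∉ D := fun h => (Finset.mem_erase.1 (hDsub h)).1 rfl
  have ht'D : t' ∉ D := fun h => htD (dup_mem_iff G hN.symm hD h)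
  -- d ≥ 2
  have hd2 : 2 ≤ d := by
    have : ({t, t'} : Finset V) ⊆ C := by
      intro x hx
      rcases Finset.mem_insert.1 hx with rfl | hx
      · exact htC
      · exact (Finset.mem_singleton.1 hx) ▸ ht'C
    have hcard : ({t, t'} : Finset V).card = 2 := Finset.card_pair hne
    calc 2 = ({t, t'} : Finset V).card := hcard.symm
      _ ≤ C.card := Finset.card_le_card this
      _ = d := hd C hC
  -- the walk
  obtain ⟨n, W, hW0, hWn, hWmin, hWcard⟩ := hconn C D hC hD
  obtain ⟨i, hi, h1, h2⟩ := exists_flip n (hW0 ▸ htC) (hWn ▸ htD)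
  have hWi := hWmin i hi.le
  have hWi1 := hWmin (i + 1) hi
  have h1' : t' ∈ W i := dup_mem_iff G hN hWi h1
  have h2' : t' ∉ W (i + 1) := fun h => h2 (dup_mem_iff G hN.symm hWi1 h)
  -- intersection misses both t and t'
  have hsub : W i ∩ W (i + 1) ⊆ ((W i).erase t).erase t' := by
    intro x hx
    obtain ⟨hx1, hx2⟩ := Finset.mem_inter.1 hx
    exact Finset.mem_erase.2 ⟨fun h => h2' (h ▸ hx2),
      Finset.mem_erase.2 ⟨fun h => h2 (h ▸ hx2), hx1⟩⟩
  have hle : (W i ∩ W (i + 1)).card ≤ d - 2 := by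
    have := Finset.card_le_card hsub
    rw [Finset.card_erase_of_mem (Finset.mem_erase.2 ⟨hne.symm, h1'⟩),
      Finset.card_erase_of_mem h1, hd (W i) hWi] at this
    exact this
  have heq := hWcard i hi
  omega
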